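/- arXiv:1806.01086 — 5 statements merged into one kernel-verified Lean document; each statement's English description precedes it below -/
import Mathlib

section
/- Let G be a connected Feynman graph with mass set E^M and external vertex set V^ext. Then the function s_G(γ) = 2h¹(γ) + δ^{mm}_γ on 2^{E_G} is supermodular, where δ^{mm}_γ = 1 if the edge subgraph γ is mass-momentum spanning and 0 otherwise. -/
/-!
The cycle rank is `|γ| - rank γ`, where `rank γ` is the dimension of the span of the
incidence vectors of the edges of `γ`. By the Grassmann formula this rank is submodular, so
`2 h¹` is supermodular, with slack `2 (dim (⟨I⟩ ∩ ⟨J⟩) - dim ⟨I ∩ J⟩)`. The mass-momentum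
indicator is monotone, hence supermodular except when `I` and `J` are mass-momentum spanning
but `I ∩ J` is not. In that case two external vertices `v, w` are joined in `I` and in `J` but
not in `I ∩ J`, so `e_v - e_w` lies in `⟨I⟩ ∩ ⟨J⟩` but not in `⟨I ∩ J⟩`; the slack is then at
least `2`, which pays for the defect `1` of the indicator.
-/

open scoped Classical

/-- Signed incidence vector of an (oriented) edge `e`: head minus tail, in `ℚ^V`. -/
noncomputable def bd {V E : Type*} (ends : E → V × V) (e : E) : V → ℚ :=
  fun v => (if v = (ends e).1 then 1 else 0) - (if v = (ends e).2 then 1 else 0)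

/-- Rank function of the graphic matroid of the graph. -/
noncomputable def grank {V E : Type*} [Fintype E] (ends : E → V × V) (γ : Finset E) : ℕ :=
  Module.finrank ℚ (Submodule.span ℚ (bd ends '' ↑γ))

/-- First Betti number (cycle rank) of the edge subgraph on `γ`. -/
noncomputable def cycleRank {V E : Type*} [Fintype E] (ends : E → V × V)
    (γ : Finset E) : ℤ :=
  (γ.card : ℤ) - grank ends γ

/-- One step of adjacency through an edge of `γ`. -/
def step {V E : Type*} (ends : E → V × V) (γ : Finset E) (a b : V) : Prop :=
  ∃ e ∈ γ, ends e = (a, b) ∨ ends e = (b, a)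

/-- `a` and `b` lie in the same connected component of the edge subgraph `γ`. -/
def reach {V E : Type*} (ends : E → V × V) (γ : Finset E) (a b : V) : Prop :=
  Relation.EqvGen (step ends γ) a b

/-- `γ` is mass-momentum spanning: it contains all massive edges `EM` and all external
vertices `Vext` lie in a single connected component of the edge subgraph `γ`. -/
def mmSpanning {V E : Type*} (ends : E → V × V) (EM : Finset E) (Vext : Finset V)
    (γ : Finset E) : Prop :=
  EM ⊆ γ ∧ ∀ v ∈ Vext, ∀ w ∈ Vext, reach ends γ v w

/-- The set function `s_G(γ) = 2 h¹(γ) + δ^{mm}_γ` of a Feynman graph. -/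
noncomputable def sG {V E : Type*} [Fintype E] (ends : E → V × V) (EM : Finset E)
    (Vext : Finset V) (γ : Finset E) : ℤ :=
  2 * cycleRank ends γ + (if mmSpanning ends EM Vext γ then 1 else 0)

open Finset

section Reach

variable {V E : Type*} (ends : E → V × V)

lemma reach_mono {γ γ' : Finset E} (h : γ ⊆ γ') {a b : V} (hab : reach ends γ a b) :
    reach ends γ' a b :=
  Relation.EqvGen.mono (fun _ _ ⟨e, he, hends⟩ => ⟨e, h he, hends⟩) a b hab

lemma mmSpanning_mono (EM : Finset E) (Vext : Finset V) {γ γ' : Finset E} (h : γ ⊆ γ')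
    (hγ : mmSpanning ends EM Vext γ) : mmSpanning ends EM Vext γ' :=
  ⟨hγ.1.trans h, fun v hv w hw => reach_mono ends h (hγ.2 v hv w hw)⟩

lemma reach_iff_of_mem {γ : Finset E} {e : E} (he : e ∈ γ) (v : V) :
    reach ends γ v (ends e).1 ↔ reach ends γ v (ends e).2 := by
  have hstep : reach ends γ (ends e).1 (ends e).2 := .rel _ _ ⟨e, he, .inl rfl⟩
  exact ⟨fun h => h.trans _ _ _ hstep, fun h => h.trans _ _ _ hstep.symm⟩

end Reach

section IncidenceSpan

variable {V E : Type*} (ends : E → V × V)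

noncomputable abbrev incidenceSpan (γ : Finset E) : Submodule ℚ (V → ℚ) :=
  Submodule.span ℚ (bd ends '' ↑γ)

lemma grank_eq_finrank [Fintype E] (γ : Finset E) :
    grank ends γ = Module.finrank ℚ ↥(incidenceSpan ends γ) :=
  rfl

lemma bd_eq (e : E) : bd ends e = Pi.single (ends e).1 1 - Pi.single (ends e).2 1 := by
  ext u
  simp [bd, Pi.single_apply]

lemma bd_mem_incidenceSpan {γ : Finset E} {e : E} (he : e ∈ γ) :
    bd ends e ∈ incidenceSpan ends γ :=
  Submodule.subset_span ⟨e, he, rfl⟩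

lemma incidenceSpan_mono {γ γ' : Finset E} (h : γ ⊆ γ') :
    incidenceSpan ends γ ≤ incidenceSpan ends γ' :=
  Submodule.span_mono (Set.image_mono (coe_subset.mpr h))

lemma incidenceSpan_union (I J : Finset E) :
    incidenceSpan ends (I ∪ J) = incidenceSpan ends I ⊔ incidenceSpan ends J := by
  rw [incidenceSpan, coe_union, Set.image_union, Submodule.span_union]

lemma incidenceSpan_inter_le (I J : Finset E) :
    incidenceSpan ends (I ∩ J) ≤ incidenceSpan ends I ⊓ incidenceSpan ends J :=
  le_inf (incidenceSpan_mono ends inter_subset_left) (incidenceSpan_mono ends inter_subset_right)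

lemma single_sub_single_mem_incidenceSpan {γ : Finset E} {v w : V} (h : reach ends γ v w) :
    Pi.single v 1 - Pi.single w 1 ∈ incidenceSpan ends γ := by
  induction h with
  | rel a b hab =>
      obtain ⟨e, he, hends | hends⟩ := hab
      · simpa [bd_eq, hends] using bd_mem_incidenceSpan ends he
      · simpa [bd_eq, hends] using Submodule.neg_mem _ (bd_mem_incidenceSpan ends he)
  | refl a => simp
  | symm a b _ ih => simpa using Submodule.neg_mem _ ih
  | trans a b c _ _ ihab ihbc => simpa using Submodule.add_mem _ ihab ihbc

lemma sum_eq_zero_of_mem_incidenceSpan {γ : Finset E} (S : Finset V)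
    (hS : ∀ e ∈ γ, (ends e).1 ∈ S ↔ (ends e).2 ∈ S) {x : V → ℚ}
    (hx : x ∈ incidenceSpan ends γ) : ∑ u ∈ S, x u = 0 := by
  let φ : (V → ℚ) →ₗ[ℚ] ℚ := ∑ u ∈ S, LinearMap.proj u
  have hφ (y : V → ℚ) : φ y = ∑ u ∈ S, y u := by simp [φ]
  suffices incidenceSpan ends γ ≤ LinearMap.ker φ by simpa [hφ] using this hx
  rw [incidenceSpan, Submodule.span_le]
  rintro _ ⟨e, he, rfl⟩
  by_cases h1 : (ends e).1 ∈ S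
  · simp [hφ, bd_eq, sum_sub_distrib, h1, (hS e he).mp h1]
  · simp [hφ, bd_eq, sum_sub_distrib, h1, mt (hS e he).mpr h1]

lemma single_sub_single_notMem_incidenceSpan [Fintype V] {γ : Finset E} {v w : V}
    (h : ¬ reach ends γ v w) : Pi.single v 1 - Pi.single w 1 ∉ incidenceSpan ends γ := by
  intro hmem
  have hsum := sum_eq_zero_of_mem_incidenceSpan ends {u | reach ends γ v u}
    (fun e he => by simpa using reach_iff_of_mem ends he v) hmem
  have hv : reach ends γ v v := .refl v
  simp [sum_sub_distrib, hv, h] at hsum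

end IncidenceSpan

section Rank

variable {V E : Type*} [Fintype V] [Fintype E] (ends : E → V × V)

lemma grank_union_add_finrank_inf (I J : Finset E) :
    grank ends (I ∪ J) + Module.finrank ℚ ↥(incidenceSpan ends I ⊓ incidenceSpan ends J) =
      grank ends I + grank ends J := by
  rw [grank_eq_finrank, incidenceSpan_union]
  exact Submodule.finrank_sup_add_finrank_inf_eq _ _

lemma grank_inter_add_grank_union_le (I J : Finset E) :
    grank ends (I ∩ J) + grank ends (I ∪ J) ≤ grank ends I + grank ends J := by
  have := Submodule.finrank_mono (incidenceSpan_inter_le ends I J)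
  have := grank_union_add_finrank_inf ends I J
  simp only [grank_eq_finrank] at *
  omega

lemma grank_inter_add_grank_union_lt {I J : Finset E} {x : V → ℚ}
    (hxI : x ∈ incidenceSpan ends I) (hxJ : x ∈ incidenceSpan ends J)
    (hx : x ∉ incidenceSpan ends (I ∩ J)) :
    grank ends (I ∩ J) + grank ends (I ∪ J) < grank ends I + grank ends J := by
  have hlt : incidenceSpan ends (I ∩ J) < incidenceSpan ends I ⊓ incidenceSpan ends J :=
    (incidenceSpan_inter_le ends I J).lt_of_not_ge fun hle => hx (hle ⟨hxI, hxJ⟩)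
  have := Submodule.finrank_lt_finrank_of_lt hlt
  have := grank_union_add_finrank_inf ends I J
  simp only [grank_eq_finrank] at *
  omega

lemma grank_inter_add_grank_union_lt_of_mmSpanning {EM : Finset E} {Vext : Finset V}
    {I J : Finset E} (hI : mmSpanning ends EM Vext I) (hJ : mmSpanning ends EM Vext J)
    (hIJ : ¬ mmSpanning ends EM Vext (I ∩ J)) :
    grank ends (I ∩ J) + grank ends (I ∪ J) < grank ends I + grank ends J := by
  obtain ⟨v, hv, w, hw, hvw⟩ : ∃ v ∈ Vext, ∃ w ∈ Vext, ¬ reach ends (I ∩ J) v w := by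
    by_contra! h
    exact hIJ ⟨subset_inter hI.1 hJ.1, h⟩
  exact grank_inter_add_grank_union_lt ends
    (single_sub_single_mem_incidenceSpan ends (hI.2 v hv w hw))
    (single_sub_single_mem_incidenceSpan ends (hJ.2 v hv w hw))
    (single_sub_single_notMem_incidenceSpan ends hvw)

end Rank

lemma ite_mmSpanning_add_le {V E : Type*} (ends : E → V × V) (EM : Finset E) (Vext : Finset V)
    {I J : Finset E} (hIJ : mmSpanning ends EM Vext I → mmSpanning ends EM Vext J →
      mmSpanning ends EM Vext (I ∩ J)) :
    ((if mmSpanning ends EM Vext I then 1 else 0) +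
      (if mmSpanning ends EM Vext J then 1 else 0) : ℤ) ≤
      (if mmSpanning ends EM Vext (I ∩ J) then 1 else 0) +
      (if mmSpanning ends EM Vext (I ∪ J) then 1 else 0) := by
  have hIU := mmSpanning_mono ends EM Vext (subset_union_left : I ⊆ I ∪ J)
  have hJU := mmSpanning_mono ends EM Vext (subset_union_right : J ⊆ I ∪ J)
  split_ifs <;> simp_all

theorem sG_supermodular_general {V E : Type*} [Fintype V] [Fintype E] (ends : E → V × V)
    (EM : Finset E) (Vext : Finset V) :
    ∀ I J : Finset E,
      sG ends EM Vext I + sG ends EM Vext J ≤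
        sG ends EM Vext (I ∩ J) + sG ends EM Vext (I ∪ J) := by
  intro I J
  have hcard : ((I ∩ J).card : ℤ) + (I ∪ J).card = I.card + J.card := by
    exact_mod_cast card_inter_add_card_union I J
  simp only [sG, cycleRank]
  by_cases hIJ : mmSpanning ends EM Vext I → mmSpanning ends EM Vext J →
      mmSpanning ends EM Vext (I ∩ J)
  · have hrank : (grank ends (I ∩ J) + grank ends (I ∪ J) : ℤ) ≤
        grank ends I + grank ends J := by
      exact_mod_cast grank_inter_add_grank_union_le ends I J
    linarith [ite_mmSpanning_add_le ends EM Vext hIJ]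
  · obtain ⟨hI, hJ, hIJ⟩ : mmSpanning ends EM Vext I ∧ mmSpanning ends EM Vext J ∧
        ¬ mmSpanning ends EM Vext (I ∩ J) := by tauto
    have hrank : (grank ends (I ∩ J) + grank ends (I ∪ J) + 1 : ℤ) ≤
        grank ends I + grank ends J := by
      exact_mod_cast grank_inter_add_grank_union_lt_of_mmSpanning ends hI hJ hIJ
    have hU := mmSpanning_mono ends EM Vext (subset_union_left : I ⊆ I ∪ J) hI
    simp only [if_pos hI, if_pos hJ, if_neg hIJ, if_pos hU]
    linarith

/-- Let `G` be a connected Feynman graph with massive edges `EM` and external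
vertices `Vext`.  Then `s_G(γ) = 2 h¹(γ) + δ^{mm}_γ` is supermodular on `2^{E_G}`. -/
theorem sG_supermodular {V E : Type*} [Fintype V] [Fintype E] (ends : E → V × V)
    (EM : Finset E) (Vext : Finset V)
    (hconn : ∀ v w : V, reach ends Finset.univ v w) :
    ∀ I J : Finset E,
      sG ends EM Vext I + sG ends EM Vext J ≤
        sG ends EM Vext (I ∩ J) + sG ends EM Vext (I ∪ J) :=
  sG_supermodular_general ends EM Vext
end

section
/- Let E be a finite set. A collection 𝒢 ⊆ 2^E \ {∅, E} is a building set of the lattice 2^E \ {E} (i.e., for every I ⊊ E, the maximal elements of {J ∈ 𝒢 ∪ {{i}} : J ⊆ I} partition I) if and only if 𝒢 together with all singletons satisfies: {i} ∈ 𝒢 for all i (after adjoining singletons), and for all I₁, I₂ ∈ 𝒢 with I₁ ∩ I₂ ≠ ∅, either I₁ ∪ I₂ ∈ 𝒢 or I₁ ∪ I₂ = E. -/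
/-!
Let `𝒢'` be `𝒢` together with all singletons. Every point `i ∈ I` lies in some maximal element
of `𝒢'` below `I`, namely one above `{i}`. If `𝒢'` is closed under unions of intersecting pairs
that stay proper, two maximal elements below `I ⊊ E` that meet have their union in `𝒢'`, hence
both equal it. Conversely, if `I₁, I₂ ∈ 𝒢'` meet in `i` and `I₁ ∪ I₂ ⊊ E`, the maximal elements
below `I₁ ∪ I₂` above `I₁` and above `I₂` both contain `i`, so they coincide, and then that
element is `I₁ ∪ I₂` itself.
-/

namespace Finset

variable {α : Type*} {P : Finset α → Prop} {I K J J' : Finset α}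

lemma maximal_and_subset_iff :
    Maximal (fun J ↦ P J ∧ J ⊆ I) J ↔
      P J ∧ J ⊆ I ∧ ∀ J', P J' → J' ⊆ I → J ⊆ J' → J = J' := by
  simp only [maximal_iff, and_imp, and_assoc]

lemma exists_superset_maximal_and_subset (hK : P K) (hKI : K ⊆ I) :
    ∃ J, K ⊆ J ∧ Maximal (fun J ↦ P J ∧ J ⊆ I) J :=
  (I.powerset.finite_toSet.subset fun _ hJ ↦ mem_powerset.2 hJ.2)
    |>.exists_le_maximal (a := K) ⟨hK, hKI⟩

variable [DecidableEq α]

lemma eq_of_maximal_and_subset_of_inter_nonempty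
    (hunion : ∀ A B, P A → P B → (A ∩ B).Nonempty → A ∪ B ⊆ I → P (A ∪ B))
    (hJ : Maximal (fun J ↦ P J ∧ J ⊆ I) J) (hJ' : Maximal (fun J ↦ P J ∧ J ⊆ I) J')
    (hJJ' : (J ∩ J').Nonempty) : J = J' := by
  have hsub : J ∪ J' ⊆ I := union_subset hJ.prop.2 hJ'.prop.2
  have hmem : P (J ∪ J') ∧ J ∪ J' ⊆ I := ⟨hunion J J' hJ.prop.1 hJ'.prop.1 hJJ' hsub, hsub⟩
  exact (hJ.eq_of_le hmem subset_union_left).trans (hJ'.eq_of_le hmem subset_union_right).symm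

lemma existsUnique_maximal_and_subset_mem (hP : ∀ a, P {a})
    (hunion : ∀ A B, P A → P B → (A ∩ B).Nonempty → A ∪ B ⊆ I → P (A ∪ B))
    {i : α} (hi : i ∈ I) :
    ∃! J, Maximal (fun J ↦ P J ∧ J ⊆ I) J ∧ i ∈ J := by
  obtain ⟨J, hiJ, hJ⟩ := exists_superset_maximal_and_subset (hP i) (singleton_subset_iff.2 hi)
  refine ⟨J, ⟨hJ, singleton_subset_iff.1 hiJ⟩, fun J' ⟨hJ', hiJ'⟩ ↦ ?_⟩
  exact eq_of_maximal_and_subset_of_inter_nonempty hunion hJ' hJ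
    ⟨i, mem_inter.2 ⟨hiJ', singleton_subset_iff.1 hiJ⟩⟩

lemma union_mem_of_existsUnique_maximal_and_subset {I₁ I₂ : Finset α}
    (h : ∀ i ∈ I₁ ∪ I₂, ∃! J, Maximal (fun J ↦ P J ∧ J ⊆ I₁ ∪ I₂) J ∧ i ∈ J)
    (h₁ : P I₁) (h₂ : P I₂) (h₁₂ : (I₁ ∩ I₂).Nonempty) : P (I₁ ∪ I₂) := by
  obtain ⟨i, hi⟩ := h₁₂
  obtain ⟨hi₁, hi₂⟩ := mem_inter.1 hi
  obtain ⟨J₁, hIJ₁, hJ₁⟩ := exists_superset_maximal_and_subset h₁ subset_union_left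
  obtain ⟨J₂, hIJ₂, hJ₂⟩ := exists_superset_maximal_and_subset h₂ subset_union_right
  have hJ₁₂ : J₁ = J₂ :=
    (h i (mem_union_left _ hi₁)).unique ⟨hJ₁, hIJ₁ hi₁⟩ ⟨hJ₂, hIJ₂ hi₂⟩
  have hJ₁_eq : J₁ = I₁ ∪ I₂ :=
    hJ₁.prop.2.antisymm (union_subset hIJ₁ (hJ₁₂ ▸ hIJ₂))
  exact hJ₁_eq ▸ hJ₁.prop.1

variable [Fintype α]

theorem forall_existsUnique_maximal_and_subset_iff (hP : ∀ a, P {a}) :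
    (∀ I : Finset α, I ⊂ univ → ∀ i ∈ I, ∃! J, Maximal (fun J ↦ P J ∧ J ⊆ I) J ∧ i ∈ J) ↔
      ∀ I₁, P I₁ → ∀ I₂, P I₂ → (I₁ ∩ I₂).Nonempty → P (I₁ ∪ I₂) ∨ I₁ ∪ I₂ = univ := by
  constructor
  · intro h I₁ h₁ I₂ h₂ h₁₂
    refine or_iff_not_imp_right.2 fun hne ↦ ?_
    exact union_mem_of_existsUnique_maximal_and_subset
      (h _ ((subset_univ _).ssubset_of_ne hne)) h₁ h₂ h₁₂
  · intro h I hI i hi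
    refine existsUnique_maximal_and_subset_mem hP (fun A B hA hB hAB hABI ↦ ?_) hi
    exact (h A hA B hB hAB).resolve_right fun hU ↦ hI.ne (univ_subset_iff.1 (hU ▸ hABI))

end Finset

theorem building_set_iff_general {α : Type*} [DecidableEq α] [Fintype α]
    (𝒢 : Finset (Finset α)) :
    (∀ I : Finset α, I ⊂ Finset.univ → ∀ i ∈ I,
        ∃! J : Finset α,
          ((J ∈ 𝒢 ∨ ∃ a, J = {a}) ∧ J ⊆ I ∧
            ∀ J' : Finset α, (J' ∈ 𝒢 ∨ ∃ a, J' = {a}) → J' ⊆ I → J ⊆ J' → J = J') ∧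
          i ∈ J) ↔
      (∀ I₁ : Finset α, (I₁ ∈ 𝒢 ∨ ∃ a, I₁ = {a}) →
        ∀ I₂ : Finset α, (I₂ ∈ 𝒢 ∨ ∃ a, I₂ = {a}) →
        (I₁ ∩ I₂).Nonempty →
        ((I₁ ∪ I₂ ∈ 𝒢 ∨ ∃ a, I₁ ∪ I₂ = {a}) ∨ I₁ ∪ I₂ = Finset.univ)) := by
  simpa only [Finset.maximal_and_subset_iff] using
    Finset.forall_existsUnique_maximal_and_subset_iff
      (P := fun J ↦ J ∈ 𝒢 ∨ ∃ a, J = {a}) fun a ↦ Or.inr ⟨a, rfl⟩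

/-- Let `E` be a finite set and `𝒢 ⊆ 2^E \ {∅, E}`.  Write
`𝒢' = 𝒢 ∪ {singletons}`.  Then `𝒢` is a building set of the lattice `2^E \ {E}` — i.e.
for every `I ⊊ E` the maximal elements of `{J ∈ 𝒢' : J ⊆ I}` partition `I` (each `i ∈ I`
lies in a unique maximal element) — if and only if for all `I₁, I₂ ∈ 𝒢'` with
`I₁ ∩ I₂ ≠ ∅`, either `I₁ ∪ I₂ ∈ 𝒢'` or `I₁ ∪ I₂ = E`. -/
theorem building_set_iff {α : Type*} [DecidableEq α] [Fintype α]
    (𝒢 : Finset (Finset α))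
    (hne : ∀ I ∈ 𝒢, I ≠ ∅) (hproper : ∀ I ∈ 𝒢, I ≠ Finset.univ) :
    (∀ I : Finset α, I ⊂ Finset.univ → ∀ i ∈ I,
        ∃! J : Finset α,
          ((J ∈ 𝒢 ∨ ∃ a, J = {a}) ∧ J ⊆ I ∧
            ∀ J' : Finset α, (J' ∈ 𝒢 ∨ ∃ a, J' = {a}) → J' ⊆ I → J ⊆ J' → J = J') ∧
          i ∈ J) ↔
      (∀ I₁ : Finset α, (I₁ ∈ 𝒢 ∨ ∃ a, I₁ = {a}) →
        ∀ I₂ : Finset α, (I₂ ∈ 𝒢 ∨ ∃ a, I₂ = {a}) →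
        (I₁ ∩ I₂).Nonempty →
        ((I₁ ∪ I₂ ∈ 𝒢 ∨ ∃ a, I₁ ∪ I₂ = {a}) ∨ I₁ ∪ I₂ = Finset.univ)) :=
  building_set_iff_general 𝒢
end

section
/- Let 𝒢 ⊆ 2^E \ {E} be a building set containing all singletons. A subset 𝒩 ⊆ 𝒢 is nested if and only if: (1) any two elements of 𝒩 are either disjoint or comparable by inclusion, and (2) for any k ≥ 2 pairwise disjoint elements I₁,…,I_k ∈ 𝒩, the union ⋃ I_j is not in 𝒢 ∪ {E}. -/
namespace Finset

variable {α : Type*} [DecidableEq α]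

theorem not_subset_of_inter_eq_empty {A B : Finset α} (hA : A.Nonempty) (h : A ∩ B = ∅) :
    ¬ A ⊆ B := fun hAB => hA.ne_empty (inter_eq_left.2 hAB ▸ h)

theorem incomparable_of_inter_eq_empty {A B : Finset α} (hA : A.Nonempty) (hB : B.Nonempty)
    (h : A ∩ B = ∅) : ¬ A ⊆ B ∧ ¬ B ⊆ A :=
  ⟨not_subset_of_inter_eq_empty hA h, not_subset_of_inter_eq_empty hB (inter_comm A B ▸ h)⟩

/-- Two incomparable members of a nested family would form a subfamily whose union lies
in `𝒢 ∪ {univ}` by the building-set axiom, as soon as they intersect. -/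
theorem inter_eq_empty_or_subset_of_nested [Fintype α] {𝒢 𝒩 : Finset (Finset α)}
    (hbuild : ∀ I₁ ∈ 𝒢, ∀ I₂ ∈ 𝒢, (I₁ ∩ I₂).Nonempty → I₁ ∪ I₂ ∈ 𝒢 ∨ I₁ ∪ I₂ = univ)
    (h𝒩 : 𝒩 ⊆ 𝒢)
    (hnest : ∀ F ⊆ 𝒩, 2 ≤ F.card → (∀ A ∈ F, ∀ B ∈ F, A ≠ B → ¬ A ⊆ B ∧ ¬ B ⊆ A) →
      F.sup id ≠ univ ∧ F.sup id ∉ 𝒢)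
    {A B : Finset α} (hA : A ∈ 𝒩) (hB : B ∈ 𝒩) : A ∩ B = ∅ ∨ A ⊆ B ∨ B ⊆ A := by
  by_contra! ⟨hAB, hnAB, hnBA⟩
  have hne : A ≠ B := by rintro rfl; exact hnAB le_rfl
  have hpair : ({A, B} : Finset (Finset α)) ⊆ 𝒩 := insert_subset hA (singleton_subset_iff.2 hB)
  have hinc : ∀ X ∈ ({A, B} : Finset (Finset α)), ∀ Y ∈ ({A, B} : Finset (Finset α)),
      X ≠ Y → ¬ X ⊆ Y ∧ ¬ Y ⊆ X := by
    simp only [mem_insert, mem_singleton]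
    rintro X (rfl | rfl) Y (rfl | rfl) hXY <;> tauto
  obtain ⟨hunion_ne, hunion_notMem⟩ := hnest _ hpair (card_pair hne).ge hinc
  simp only [sup_insert, sup_singleton, id] at hunion_ne hunion_notMem
  exact (hbuild A (h𝒩 hA) B (h𝒩 hB) hAB).elim hunion_notMem hunion_ne

end Finset

theorem nested_set_iff_general {α : Type*} [DecidableEq α] [Fintype α]
    (𝒢 : Finset (Finset α))
    (hne : ∀ I ∈ 𝒢, I ≠ ∅)
    (hbuild : ∀ I₁ ∈ 𝒢, ∀ I₂ ∈ 𝒢, (I₁ ∩ I₂).Nonempty →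
      I₁ ∪ I₂ ∈ 𝒢 ∨ I₁ ∪ I₂ = Finset.univ)
    (𝒩 : Finset (Finset α)) (h𝒩 : 𝒩 ⊆ 𝒢) :
    (∀ F ⊆ 𝒩, 2 ≤ F.card →
        (∀ A ∈ F, ∀ B ∈ F, A ≠ B → ¬ A ⊆ B ∧ ¬ B ⊆ A) →
        F.sup id ≠ Finset.univ ∧ F.sup id ∉ 𝒢) ↔
      ((∀ A ∈ 𝒩, ∀ B ∈ 𝒩, A ∩ B = ∅ ∨ A ⊆ B ∨ B ⊆ A) ∧
        (∀ F ⊆ 𝒩, 2 ≤ F.card →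
          (∀ A ∈ F, ∀ B ∈ F, A ≠ B → A ∩ B = ∅) →
          F.sup id ∉ 𝒢 ∧ F.sup id ≠ Finset.univ)) := by
  have hnonempty : ∀ A ∈ 𝒩, A.Nonempty := fun A hA => Finset.nonempty_iff_ne_empty.2 (hne A (h𝒩 hA))
  constructor
  · intro hnest
    refine ⟨fun A hA B hB => Finset.inter_eq_empty_or_subset_of_nested hbuild h𝒩 hnest hA hB,
      fun F hF hcard hdisj => (hnest F hF hcard fun A hA B hB hAB => ?_).symm⟩
    exact Finset.incomparable_of_inter_eq_empty (hnonempty A (hF hA)) (hnonempty B (hF hB))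
      (hdisj A hA B hB hAB)
  · rintro ⟨hlaminar, hdisjoint⟩ F hF hcard hinc
    refine (hdisjoint F hF hcard fun A hA B hB hAB => ?_).symm
    exact (hlaminar A (hF hA) B (hF hB)).resolve_right (not_or.2 (hinc A hA B hB hAB))

/-- Let `𝒢 ⊆ 2^E \ {E}` be a building set containing all singletons (so
`∅ ∉ 𝒢`, `E ∉ 𝒢`, `{i} ∈ 𝒢` for all `i`, and for intersecting `I₁, I₂ ∈ 𝒢` either
`I₁ ∪ I₂ ∈ 𝒢` or `I₁ ∪ I₂ = E`).  A subset `𝒩 ⊆ 𝒢` is nested — i.e. for every subfamily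
of `k ≥ 2` pairwise incomparable elements of `𝒩` the join exists in `2^E \ {E}` (the
union is not `E`) and is not in `𝒢` — if and only if (1) any two elements of `𝒩` are
disjoint or comparable, and (2) for every subfamily of `k ≥ 2` pairwise disjoint elements
of `𝒩`, the union is not in `𝒢 ∪ {E}`. -/
theorem nested_set_iff {α : Type*} [DecidableEq α] [Fintype α]
    (𝒢 : Finset (Finset α))
    (hne : ∀ I ∈ 𝒢, I ≠ ∅) (hproper : ∀ I ∈ 𝒢, I ≠ Finset.univ)
    (hsingle : ∀ a : α, {a} ∈ 𝒢)
    (hbuild : ∀ I₁ ∈ 𝒢, ∀ I₂ ∈ 𝒢, (I₁ ∩ I₂).Nonempty →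
      I₁ ∪ I₂ ∈ 𝒢 ∨ I₁ ∪ I₂ = Finset.univ)
    (𝒩 : Finset (Finset α)) (h𝒩 : 𝒩 ⊆ 𝒢) :
    (∀ F ⊆ 𝒩, 2 ≤ F.card →
        (∀ A ∈ F, ∀ B ∈ F, A ≠ B → ¬ A ⊆ B ∧ ¬ B ⊆ A) →
        F.sup id ≠ Finset.univ ∧ F.sup id ∉ 𝒢) ↔
      ((∀ A ∈ 𝒩, ∀ B ∈ 𝒩, A ∩ B = ∅ ∨ A ⊆ B ∨ B ⊆ A) ∧
        (∀ F ⊆ 𝒩, 2 ≤ F.card →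
          (∀ A ∈ F, ∀ B ∈ F, A ≠ B → A ∩ B = ∅) →
          F.sup id ∉ 𝒢 ∧ F.sup id ≠ Finset.univ)) :=
  nested_set_iff_general 𝒢 hne hbuild 𝒩 h𝒩
end

section
/- Let G be a connected Feynman graph with generic euclidean kinematics and γ ⊆ E_G an edge subgraph with connected components γ₀,…,γ_k. The lowest-degree part of the first Symanzik polynomial ψ_G in the variables (α_e)_{e∈γ} has degree h¹(γ), and equals ψ_γ · ψ_{G/γ}; moreover the remainder R^ψ_{G|γ} = ψ_G − ψ_γ ψ_{G/γ} vanishes if and only if for every spanning tree T of G, each intersection T ∩ γᵢ is connected. -/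
open scoped Classical

/-- The first Symanzik polynomial `ψ_G = ∑_T ∏_{e ∉ T} α_e`, summing over spanning
trees. -/
noncomputable def psiG {V E : Type*} [Fintype V] [Fintype E] (ends : E → V × V) :
    MvPolynomial E ℝ :=
  ∑ T ∈ Finset.univ.filter (fun T : Finset E =>
      grank ends T = grank ends Finset.univ ∧ T.card = grank ends Finset.univ),
    ∏ e ∈ Finset.univ \ T, MvPolynomial.X e

/-- `ψ_γ = ∏ᵢ ψ_{γᵢ} = ∑_F ∏_{e ∈ γ \ F} α_e`, summing over maximal forests `F` of the
edge subgraph `γ`. -/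
noncomputable def psiSub {V E : Type*} [Fintype E] (ends : E → V × V) (γ : Finset E) :
    MvPolynomial E ℝ :=
  ∑ F ∈ Finset.univ.filter (fun F : Finset E =>
      F ⊆ γ ∧ grank ends F = grank ends γ ∧ F.card = grank ends γ),
    ∏ e ∈ γ \ F, MvPolynomial.X e

/-- `ψ_{G/γ} = ∑_S ∏_{e ∈ (E \ γ) \ S} α_e`, summing over spanning trees `S` of the
quotient graph `G/γ`. -/
noncomputable def psiQuot {V E : Type*} [Fintype E] (ends : E → V × V) (γ : Finset E) :
    MvPolynomial E ℝ :=
  ∑ S ∈ Finset.univ.filter (fun S : Finset E =>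
      S ⊆ Finset.univ \ γ ∧ grank ends (γ ∪ S) = grank ends Finset.univ ∧
        S.card + grank ends γ = grank ends Finset.univ),
    ∏ e ∈ (Finset.univ \ γ) \ S, MvPolynomial.X e

/-!
A spanning tree `T` of `G` splits as `(T ∩ γ) ∪ (T \ γ)`. When `T ∩ γ` has full rank in `γ`, the
two pieces are a maximal forest of `γ` and a spanning tree of `G/γ`, and every such pair arises
exactly once; hence `ψ_γ ψ_{G/γ}` is the part of `ψ_G` summed over these trees. As `T ∩ γ` is
independent, the monomial of `T` has degree `|γ| - r(T ∩ γ) ≥ |γ| - r(γ)` in the variables of `γ`,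
with equality exactly for these trees. Distinct trees give distinct monomials, so the remainder
vanishes iff no spanning tree has `r(T ∩ γ) < r(γ)`.
-/

open Finset MvPolynomial

section DisjointUnion

variable {α : Type*} [DecidableEq α] {F S γ : Finset α}

lemma union_inter_eq_of_subset_of_disjoint (hF : F ⊆ γ) (hS : Disjoint S γ) :
    (F ∪ S) ∩ γ = F := by
  rw [union_inter_distrib_right, inter_eq_left.mpr hF, disjoint_iff_inter_eq_empty.mp hS,
    union_empty]

lemma union_sdiff_eq_of_subset_of_disjoint (hF : F ⊆ γ) (hS : Disjoint S γ) :
    (F ∪ S) \ γ = S := by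
  rw [union_sdiff_distrib, sdiff_eq_empty_iff_subset.mpr hF, hS.sdiff_eq_left, empty_union]

lemma univ_sdiff_union_of_subset_of_disjoint [Fintype α] (hF : F ⊆ γ) (hS : Disjoint S γ) :
    univ \ (F ∪ S) = γ \ F ∪ (univ \ γ) \ S := by
  ext e
  have := @hF e
  have : e ∈ S → e ∉ γ := fun he => disjoint_left.mp hS he
  simp only [mem_union, mem_sdiff, mem_univ, true_and]
  tauto

end DisjointUnion

section Rank

variable {V E : Type*} [Fintype E] (ends : E → V × V)

instance (A : Finset E) : FiniteDimensional ℚ (Submodule.span ℚ (bd ends '' ↑A)) :=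
  FiniteDimensional.span_of_finite ℚ (A.finite_toSet.image _)

lemma grank_mono {A B : Finset E} (h : A ⊆ B) : grank ends A ≤ grank ends B :=
  Submodule.finrank_mono (Submodule.span_mono (Set.image_mono (coe_subset.mpr h)))

lemma grank_le_card (A : Finset E) : grank ends A ≤ #A := by
  rw [grank, ← coe_image]
  exact (finrank_span_finset_le_card _).trans card_image_le

lemma grank_union_le (A B : Finset E) : grank ends (A ∪ B) ≤ grank ends A + grank ends B := by
  rw [grank, coe_union, Set.image_union, Submodule.span_union]
  exact Submodule.finrank_add_le_finrank_add_finrank _ _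

lemma grank_eq_card_of_subset {A T : Finset E} (hAT : A ⊆ T) (hT : grank ends T = #T) :
    grank ends A = #A := by
  have hsplit := grank_union_le ends A (T \ A)
  rw [union_sdiff_of_subset hAT] at hsplit
  have := grank_le_card ends A
  have := grank_le_card ends (T \ A)
  have := card_sdiff_add_card_eq_card hAT
  omega

lemma grank_union_eq_of_grank_eq {F γ : Finset E} (hFγ : F ⊆ γ) (hF : grank ends F = grank ends γ)
    (S : Finset E) : grank ends (F ∪ S) = grank ends (γ ∪ S) := by
  have hspan : Submodule.span ℚ (bd ends '' ↑F) = Submodule.span ℚ (bd ends '' ↑γ) :=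
    Submodule.eq_of_le_of_finrank_eq
      (Submodule.span_mono (Set.image_mono (coe_subset.mpr hFγ))) hF
  have hspan_union : Submodule.span ℚ (bd ends '' ↑(F ∪ S)) =
      Submodule.span ℚ (bd ends '' ↑(γ ∪ S)) := by
    simp only [coe_union, Set.image_union, Submodule.span_union, hspan]
  rw [grank, grank, hspan_union]

end Rank

section Monomials

variable {σ R : Type*} [CommSemiring R] [DecidableEq σ]

lemma prod_X_eq_monomial (s : Finset σ) :
    ∏ e ∈ s, (X e : MvPolynomial σ R) = monomial (Multiset.toFinsupp s.val) 1 := by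
  rw [← prod_X_pow_eq_monomial, Multiset.toFinsupp_support, val_toFinset]
  refine prod_congr rfl fun e he => ?_
  rw [Multiset.toFinsupp_apply, Multiset.count_eq_one_of_mem s.nodup he, pow_one]

lemma sum_toFinsupp_val_apply (γ s : Finset σ) :
    ∑ e ∈ γ, Multiset.toFinsupp s.val e = #(γ ∩ s) := by
  simp only [Multiset.toFinsupp_apply, Multiset.count_eq_of_nodup s.nodup, mem_val, sum_boole,
    filter_mem_eq_inter, Nat.cast_id]

variable [Fintype σ]

lemma exists_eq_of_mem_support_sum_prod_X_compl {𝒯 : Finset (Finset σ)} {d : σ →₀ ℕ}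
    (hd : d ∈ (∑ T ∈ 𝒯, ∏ e ∈ univ \ T, (X e : MvPolynomial σ R)).support) :
    ∃ T ∈ 𝒯, d = Multiset.toFinsupp (univ \ T).val := by
  obtain ⟨T, hT, hdT⟩ := mem_biUnion.mp (support_sum hd)
  rw [prod_X_eq_monomial] at hdT
  exact ⟨T, hT, mem_singleton.mp (support_monomial_subset hdT)⟩

lemma sum_prod_X_compl_eq_zero_iff [Nontrivial R] (𝒯 : Finset (Finset σ)) :
    ∑ T ∈ 𝒯, ∏ e ∈ univ \ T, (X e : MvPolynomial σ R) = 0 ↔ 𝒯 = ∅ := by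
  refine ⟨fun h => eq_empty_of_forall_notMem fun T hT => ?_, fun h => by rw [h, sum_empty]⟩
  have hcoeff := congrArg (coeff (Multiset.toFinsupp (univ \ T).val)) h
  have hterm (T' : Finset σ) : coeff (Multiset.toFinsupp (univ \ T).val)
      (∏ e ∈ univ \ T', (X e : MvPolynomial σ R)) = if T' = T then 1 else 0 := by
    rw [prod_X_eq_monomial, coeff_monomial]
    simp only [Multiset.toFinsupp.injective.eq_iff, val_inj, ← compl_eq_univ_sdiff, compl_inj_iff]
  rw [coeff_sum, coeff_zero, sum_congr rfl fun T' _ => hterm T', sum_ite_eq', if_pos hT] at hcoeff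
  exact one_ne_zero hcoeff

end Monomials

section Factorization

variable {V E : Type*} [Fintype E] (ends : E → V × V)

noncomputable def spanningTrees : Finset (Finset E) :=
  univ.filter fun T : Finset E =>
    grank ends T = grank ends univ ∧ T.card = grank ends univ

noncomputable def maximalForests (γ : Finset E) : Finset (Finset E) :=
  univ.filter fun F : Finset E => F ⊆ γ ∧ grank ends F = grank ends γ ∧ F.card = grank ends γ

noncomputable def quotientSpanningTrees (γ : Finset E) : Finset (Finset E) :=
  univ.filter fun S : Finset E =>
    S ⊆ univ \ γ ∧ grank ends (γ ∪ S) = grank ends univ ∧ S.card + grank ends γ = grank ends univ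

variable {ends}

lemma mem_spanningTrees {T : Finset E} :
    T ∈ spanningTrees ends ↔ grank ends T = grank ends univ ∧ #T = grank ends univ := by
  simp [spanningTrees]

lemma mem_maximalForests {γ F : Finset E} :
    F ∈ maximalForests ends γ ↔ F ⊆ γ ∧ grank ends F = grank ends γ ∧ #F = grank ends γ := by
  simp [maximalForests]

lemma mem_quotientSpanningTrees {γ S : Finset E} :
    S ∈ quotientSpanningTrees ends γ ↔
      S ⊆ univ \ γ ∧ grank ends (γ ∪ S) = grank ends univ ∧
        #S + grank ends γ = grank ends univ := by
  simp [quotientSpanningTrees]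

lemma grank_inter_eq_card {T : Finset E} (hT : T ∈ spanningTrees ends) (A : Finset E) :
    grank ends (T ∩ A) = #(T ∩ A) := by
  rw [mem_spanningTrees] at hT
  exact grank_eq_card_of_subset ends inter_subset_left (hT.1.trans hT.2.symm)

lemma union_mem_spanningTrees {γ F S : Finset E} (hF : F ∈ maximalForests ends γ)
    (hS : S ∈ quotientSpanningTrees ends γ) : F ∪ S ∈ spanningTrees ends := by
  rw [mem_maximalForests] at hF
  rw [mem_quotientSpanningTrees, subset_sdiff] at hS
  obtain ⟨hFγ, hrF, hcF⟩ := hF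
  obtain ⟨⟨-, hSγ⟩, hrS, hcS⟩ := hS
  have hFS : Disjoint F S := (hSγ.mono_right hFγ).symm
  rw [mem_spanningTrees, grank_union_eq_of_grank_eq ends hFγ hrF, card_union_of_disjoint hFS]
  exact ⟨hrS, by omega⟩

lemma inter_mem_maximalForests {γ T : Finset E} (hT : T ∈ spanningTrees ends)
    (hTγ : grank ends (T ∩ γ) = grank ends γ) : T ∩ γ ∈ maximalForests ends γ :=
  mem_maximalForests.mpr ⟨inter_subset_right, hTγ, (grank_inter_eq_card hT γ).symm.trans hTγ⟩

lemma sdiff_mem_quotientSpanningTrees {γ T : Finset E} (hT : T ∈ spanningTrees ends)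
    (hTγ : grank ends (T ∩ γ) = grank ends γ) : T \ γ ∈ quotientSpanningTrees ends γ := by
  have hcard := card_inter_add_card_sdiff T γ
  have hcTγ := grank_inter_eq_card hT γ
  rw [mem_spanningTrees] at hT
  rw [mem_quotientSpanningTrees, ← grank_union_eq_of_grank_eq ends inter_subset_right hTγ,
    union_comm, sdiff_union_inter]
  exact ⟨sdiff_subset_sdiff (subset_univ T) le_rfl, hT.1, by omega⟩

lemma psiSub_mul_psiQuot (γ : Finset E) :
    psiSub ends γ * psiQuot ends γ =
      ∑ T ∈ (spanningTrees ends).filter (fun T => grank ends (T ∩ γ) = grank ends γ),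
        ∏ e ∈ univ \ T, X e := by
  rw [psiSub, psiQuot, sum_mul_sum, ← sum_product']
  change ∑ p ∈ maximalForests ends γ ×ˢ quotientSpanningTrees ends γ, _ = _
  have subset_disjoint {F S : Finset E}
      (hFS : (F, S) ∈ maximalForests ends γ ×ˢ quotientSpanningTrees ends γ) :
      F ⊆ γ ∧ Disjoint S γ := by
    rw [mem_product, mem_maximalForests, mem_quotientSpanningTrees, subset_sdiff] at hFS
    exact ⟨hFS.1.1, hFS.2.1.2⟩
  refine sum_nbij' (fun p => p.1 ∪ p.2) (fun T => (T ∩ γ, T \ γ)) ?_ ?_ ?_ ?_ ?_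
  · rintro ⟨F, S⟩ hFS
    obtain ⟨hF, hS⟩ := subset_disjoint hFS
    rw [mem_product] at hFS
    refine mem_filter.mpr ⟨union_mem_spanningTrees hFS.1 hFS.2, ?_⟩
    rw [union_inter_eq_of_subset_of_disjoint hF hS]
    exact (mem_maximalForests.mp hFS.1).2.1
  · intro T hT
    rw [mem_filter] at hT
    exact mem_product.mpr ⟨inter_mem_maximalForests hT.1 hT.2,
      sdiff_mem_quotientSpanningTrees hT.1 hT.2⟩
  · rintro ⟨F, S⟩ hFS
    obtain ⟨hF, hS⟩ := subset_disjoint hFS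
    rw [union_inter_eq_of_subset_of_disjoint hF hS, union_sdiff_eq_of_subset_of_disjoint hF hS]
  · intro T _
    rw [union_comm]
    exact sdiff_union_inter T γ
  · rintro ⟨F, S⟩ hFS
    obtain ⟨hF, hS⟩ := subset_disjoint hFS
    rw [univ_sdiff_union_of_subset_of_disjoint hF hS,
      prod_union (disjoint_sdiff_self_right.mono sdiff_subset sdiff_subset)]

lemma psiG_sub_psiSub_mul_psiQuot [Fintype V] (γ : Finset E) :
    psiG ends - psiSub ends γ * psiQuot ends γ =
      ∑ T ∈ (spanningTrees ends).filter (fun T => grank ends (T ∩ γ) ≠ grank ends γ),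
        ∏ e ∈ univ \ T, X e := by
  rw [psiSub_mul_psiQuot, psiG]
  change ∑ T ∈ spanningTrees ends, _ - _ = _
  rw [← sum_filter_add_sum_filter_not (spanningTrees ends)
    (fun T => grank ends (T ∩ γ) = grank ends γ), add_sub_cancel_left]

lemma degree_monomial_of_mem_spanningTrees {T : Finset E} (hT : T ∈ spanningTrees ends)
    (γ : Finset E) :
    ((∑ e ∈ γ, Multiset.toFinsupp (univ \ T).val e : ℕ) : ℤ) = #γ - grank ends (T ∩ γ) := by
  rw [sum_toFinsupp_val_apply, ← compl_eq_univ_sdiff, ← sdiff_eq_inter_compl,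
    grank_inter_eq_card hT, inter_comm]
  have := card_sdiff_add_card_inter γ T
  omega

end Factorization

theorem symanzik_factorization_general {V E : Type*} [Fintype V] [Fintype E]
    (ends : E → V × V)
    (γ : Finset E) :
    (∀ d ∈ (psiSub ends γ * psiQuot ends γ).support,
        ((∑ e ∈ γ, d e : ℕ) : ℤ) = (γ.card : ℤ) - grank ends γ) ∧
      (∀ d ∈ (psiG ends - psiSub ends γ * psiQuot ends γ).support,
        (γ.card : ℤ) - grank ends γ < ((∑ e ∈ γ, d e : ℕ) : ℤ)) ∧
      (psiG ends - psiSub ends γ * psiQuot ends γ = 0 ↔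
        ∀ T : Finset E,
          grank ends T = grank ends Finset.univ → T.card = grank ends Finset.univ →
          grank ends (T ∩ γ) = grank ends γ) := by
  refine ⟨fun d hd => ?_, fun d hd => ?_, ?_⟩
  · rw [psiSub_mul_psiQuot] at hd
    obtain ⟨T, hT, rfl⟩ := exists_eq_of_mem_support_sum_prod_X_compl hd
    rw [mem_filter] at hT
    rw [degree_monomial_of_mem_spanningTrees hT.1, hT.2]
  · rw [psiG_sub_psiSub_mul_psiQuot] at hd
    obtain ⟨T, hT, rfl⟩ := exists_eq_of_mem_support_sum_prod_X_compl hd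
    rw [mem_filter] at hT
    rw [degree_monomial_of_mem_spanningTrees hT.1]
    have := grank_mono ends (inter_subset_right : T ∩ γ ⊆ γ)
    omega
  · rw [psiG_sub_psiSub_mul_psiQuot, sum_prod_X_compl_eq_zero_iff, filter_eq_empty_iff]
    simp only [mem_spanningTrees, ne_eq, not_not, and_imp]

/-- Let `G` be a connected graph and `γ ⊆ E_G` an edge subgraph with
components `γ₀, …, γ_k`.  Writing `ψ_G = ψ_γ ψ_{G/γ} + R^ψ_{G|γ}`, every monomial of
`ψ_γ ψ_{G/γ}` has degree exactly `h¹(γ) = |γ| − r(γ)` in the variables `(α_e)_{e ∈ γ}`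
and every monomial of the remainder `R^ψ_{G|γ}` has strictly larger degree in these
variables (so the lowest-degree part of `ψ_G` has degree `h¹(γ)` and equals
`ψ_γ ψ_{G/γ}`); moreover `R^ψ_{G|γ} = 0` iff for every spanning tree `T` of `G` the
intersection `T ∩ γ` is a maximal forest of `γ`, i.e. each `T ∩ γᵢ` is connected
(a spanning tree of `γᵢ`). -/
theorem symanzik_factorization {V E : Type*} [Fintype V] [Fintype E] [Nonempty V]
    (ends : E → V × V)
    (hconn : grank ends Finset.univ + 1 = Fintype.card V)
    (γ : Finset E) :
    (∀ d ∈ (psiSub ends γ * psiQuot ends γ).support,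
        ((∑ e ∈ γ, d e : ℕ) : ℤ) = (γ.card : ℤ) - grank ends γ) ∧
      (∀ d ∈ (psiG ends - psiSub ends γ * psiQuot ends γ).support,
        (γ.card : ℤ) - grank ends γ < ((∑ e ∈ γ, d e : ℕ) : ℤ)) ∧
      (psiG ends - psiSub ends γ * psiQuot ends γ = 0 ↔
        ∀ T : Finset E,
          grank ends T = grank ends Finset.univ → T.card = grank ends Finset.univ →
          grank ends (T ∩ γ) = grank ends γ) :=
  symanzik_factorization_general ends γ
end

section
/- Let f(t) = ∑_{m∈A} a_m t^m be a Laurent polynomial in n variables with all coefficients a_m real and strictly positive, and suppose the Newton polytope P(f) = Conv(A) is contained in a hyperplane {m : ⟨m,u⟩ = d} for some nonzero u ∈ ℤ^n. Then for every s ∈ ℂ^n and c ∈ ℂ the integral ∫_{(0,∞)^n} |t^s f(t)^{−c}| dt/t diverges. -/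
/-!
In logarithmic coordinates `t = exp x` the measure `dt/t` becomes Lebesgue measure and
`|t^s f(t)^{-c}|` becomes a positive function `h` on `ℝⁿ`. Since `⟨m, u⟩ = d` for every exponent
`m ∈ A`, the scaling symmetry gives `f (e^u · t) = e^d f(t)`, hence `h (x + u) = C h(x)` for a
constant `C`. A positive function multiplied by a constant under a nonzero translation is never
integrable: after replacing `u` by `-u` we may take `C ≥ 1`, and then the pairwise disjoint balls
centred at the points `k u` each carry at least the mass of the ball centred at `0`.
-/

open MeasureTheory Metric Finset

section TranslationScaling

variable {E : Type*} [NormedAddCommGroup E] [NormedSpace ℝ E] [MeasurableSpace E] [BorelSpace E]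
  {μ : Measure E} [μ.IsAddRightInvariant] [μ.IsOpenPosMeasure]

theorem not_integrable_of_forall_le_add_right {h : E → ℝ} (hpos : ∀ x, 0 < h x) {v : E}
    (hv : v ≠ 0) (hle : ∀ x, h x ≤ h (x + v)) : ¬ Integrable h μ := by
  intro hint
  set r := ‖v‖ / 2
  have hle_smul : ∀ (k : ℕ) x, h x ≤ h (x + (k : ℝ) • v) := by
    intro k
    induction k with
    | zero => simp
    | succ k ih =>
      intro x
      rw [Nat.cast_succ, add_smul, one_smul, ← add_assoc]
      exact (ih x).trans (hle _)
  have hC : 0 < ∫ x in ball 0 r, h x ∂μ := by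
    rw [setIntegral_pos_iff_support_of_nonneg_ae (ae_of_all _ fun x => (hpos x).le)
      hint.integrableOn, Function.support_eq_univ fun x => (hpos x).ne', Set.univ_inter]
    exact isOpen_ball.measure_pos μ (nonempty_ball.2 (by positivity))
  have hball : ∀ k : ℕ, ∫ x in ball 0 r, h x ∂μ ≤ ∫ x in ball ((k : ℝ) • v) r, h x ∂μ := by
    intro k
    rw [← (measurePreserving_add_right μ ((k : ℝ) • v)).setIntegral_preimage_emb
      (measurableEmbedding_addRight _) h (ball ((k : ℝ) • v) r), preimage_add_right_ball, sub_self]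
    exact setIntegral_mono hint.integrableOn
      (hint.comp_add_right ((k : ℝ) • v)).integrableOn fun x => hle_smul k x
  have hdisj : Pairwise (Function.onFun Disjoint fun k : ℕ => ball ((k : ℝ) • v) r) := by
    intro j k hjk
    apply ball_disjoint_ball
    have hjk' : (1 : ℝ) ≤ |(j : ℝ) - k| := by
      exact_mod_cast Int.one_le_abs (sub_ne_zero.2 (Nat.cast_injective.ne hjk))
    rw [dist_eq_norm, ← sub_smul, norm_smul, Real.norm_eq_abs, add_halves]
    exact le_mul_of_one_le_left (norm_nonneg v) hjk'
  have hbound : ∀ N : ℕ, N * ∫ x in ball 0 r, h x ∂μ ≤ ∫ x, h x ∂μ := by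
    intro N
    calc N * ∫ x in ball 0 r, h x ∂μ
        = ∑ k ∈ range N, ∫ x in ball 0 r, h x ∂μ := by simp
      _ ≤ ∑ k ∈ range N, ∫ x in ball ((k : ℝ) • v) r, h x ∂μ := sum_le_sum fun k _ => hball k
      _ = ∫ x in ⋃ k ∈ range N, ball ((k : ℝ) • v) r, h x ∂μ :=
        (integral_biUnion_finset _ (fun k _ => measurableSet_ball)
          (hdisj.set_pairwise _) fun k _ => hint.integrableOn).symm
      _ ≤ ∫ x, h x ∂μ := setIntegral_le_integral hint (ae_of_all _ fun x => (hpos x).le)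
  obtain ⟨N, hN⟩ := exists_nat_gt ((∫ x, h x ∂μ) / ∫ x in ball 0 r, h x ∂μ)
  rw [div_lt_iff₀ hC] at hN
  linarith [hbound N]

theorem not_integrable_of_forall_add_eq_mul {h : E → ℝ} (hpos : ∀ x, 0 < h x) {v : E}
    (hv : v ≠ 0) {C : ℝ} (hscale : ∀ x, h (x + v) = C * h x) : ¬ Integrable h μ := by
  rcases le_total 1 C with hC | hC
  · exact not_integrable_of_forall_le_add_right hpos hv fun x => by
      rw [hscale]; exact le_mul_of_one_le_left (hpos x).le hC
  · refine not_integrable_of_forall_le_add_right hpos (neg_ne_zero.2 hv) fun x => ?_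
    have hx := hscale (x + -v)
    rw [neg_add_cancel_right] at hx
    rw [hx]
    exact mul_le_of_le_one_left (hpos _).le hC

end TranslationScaling

theorem integrableOn_pos_orthant_iff_integrable_comp_exp {ι F : Type*} [Fintype ι]
    [NormedAddCommGroup F] [NormedSpace ℝ F] (g : (ι → ℝ) → F) :
    IntegrableOn g {t | ∀ i, 0 < t i} ↔
      Integrable fun x : ι → ℝ => (∏ i, Real.exp (x i)) • g fun i => Real.exp (x i) := by
  have hdet : ∀ c : ι → ℝ,
      (ContinuousLinearMap.pi fun i => c i • ContinuousLinearMap.proj i : (ι → ℝ) →L[ℝ] ι → ℝ).det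
        = ∏ i, c i := fun c => by
    simpa using ContinuousLinearMap.det_pi fun i => c i • ContinuousLinearMap.id ℝ ℝ
  have hderiv : ∀ x : ι → ℝ, HasFDerivAt (fun x i => Real.exp (x i))
      (ContinuousLinearMap.pi fun i => Real.exp (x i) • ContinuousLinearMap.proj i) x := fun x =>
    hasFDerivAt_pi.2 fun i => by
      exact (Real.hasDerivAt_exp (x i)).comp_hasFDerivAt x (hasFDerivAt_apply (𝕜 := ℝ) i x)
  have himage : (fun (x : ι → ℝ) i => Real.exp (x i)) '' Set.univ = {t | ∀ i, 0 < t i} := by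
    ext t
    refine ⟨?_, fun ht => ⟨fun i => Real.log (t i), trivial, funext fun i => Real.exp_log (ht i)⟩⟩
    rintro ⟨x, -, rfl⟩ i
    exact Real.exp_pos _
  rw [← himage, integrableOn_image_iff_integrableOn_abs_det_fderiv_smul volume MeasurableSet.univ
    (fun x _ => (hderiv x).hasFDerivWithinAt)
    (fun x _ y _ hxy => funext fun i => Real.exp_injective (congrFun hxy i)), integrableOn_univ]
  simp only [hdet, abs_prod, Real.abs_exp]

theorem sum_mul_prod_mul_zpow {ι K : Type*} [Fintype ι] [Semifield K] {A : Finset (ι → ℤ)}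
    (a : (ι → ℤ) → K) {w : ι → K} {ρ : K} (hw : ∀ m ∈ A, ∏ i, w i ^ m i = ρ) (t : ι → K) :
    ∑ m ∈ A, a m * ∏ i, (w i * t i) ^ m i = ρ * ∑ m ∈ A, a m * ∏ i, t i ^ m i := by
  rw [mul_sum]
  refine sum_congr rfl fun m hm => ?_
  simp only [mul_zpow, prod_mul_distrib, hw m hm]
  ring

theorem Real.prod_exp_zpow {ι : Type*} [Fintype ι] (x : ι → ℝ) (m : ι → ℤ) :
    ∏ i, Real.exp (x i) ^ m i = Real.exp (∑ i, m i * x i) := by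
  rw [Real.exp_sum]
  refine prod_congr rfl fun i _ => ?_
  rw [← Real.rpow_intCast, ← Real.exp_mul, mul_comm]

theorem norm_prod_smul_mellin_integrand {ι : Type*} [Fintype ι] {t : ι → ℝ} (ht : ∀ i, 0 < t i)
    {y : ℝ} (hy : 0 < y) (s : ι → ℂ) (c : ℂ) :
    ‖(∏ i, t i) • ((∏ i, (t i : ℂ) ^ s i) * (y : ℂ) ^ (-c) * ((∏ i, (t i)⁻¹ : ℝ) : ℂ))‖
      = (∏ i, t i ^ (s i).re) * y ^ (-c.re) := by
  have hprod : 0 < ∏ i, t i := prod_pos fun i _ => ht i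
  simp only [norm_smul, norm_mul, norm_prod, Complex.norm_cpow_eq_rpow_re_of_pos (ht _),
    Complex.norm_cpow_eq_rpow_re_of_pos hy, Complex.norm_real, Real.norm_eq_abs, Complex.neg_re,
    prod_inv_distrib, abs_inv, abs_of_pos (ht _), abs_of_pos hprod]
  field_simp

/-- Let `f(t) = ∑_{m ∈ A} a_m t^m` be a Laurent polynomial in `n` variables
with strictly positive real coefficients whose Newton polytope lies in an affine hyperplane
`{m : ⟨m, u⟩ = d}` for some `0 ≠ u ∈ ℤ^n`.  Then for every `s ∈ ℂ^n` and `c ∈ ℂ` the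
Mellin integrand `t^s f(t)^{-c} / ∏ tᵢ` is not (absolutely) integrable on `(0,∞)^n`,
i.e. `∫_{(0,∞)^n} |t^s f(t)^{-c}| dt/t` diverges. -/
theorem mellin_divergent_of_degenerate_newton_polytope
    (n : ℕ) (A : Finset (Fin n → ℤ)) (hA : A.Nonempty)
    (a : (Fin n → ℤ) → ℝ) (hapos : ∀ m ∈ A, 0 < a m)
    (u : Fin n → ℤ) (hu : u ≠ 0) (d : ℤ)
    (hdeg : ∀ m ∈ A, ∑ i, m i * u i = d) :
    ∀ (s : Fin n → ℂ) (c : ℂ),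
      ¬ IntegrableOn
          (fun t : Fin n → ℝ =>
            (∏ i, (t i : ℂ) ^ (s i)) *
              ((↑(∑ m ∈ A, a m * ∏ i, t i ^ (m i)) : ℂ) ^ (-c)) *
              (↑(∏ i, (t i)⁻¹) : ℂ))
          {t : Fin n → ℝ | ∀ i, 0 < t i} volume := by
  intro s c hint
  set f : (Fin n → ℝ) → ℝ := fun t => ∑ m ∈ A, a m * ∏ i, t i ^ m i
  have hf_pos : ∀ x : Fin n → ℝ, 0 < f fun i => Real.exp (x i) := fun x =>
    sum_pos (fun m hm => mul_pos (hapos m hm) (prod_pos fun i _ => zpow_pos (Real.exp_pos _) _)) hA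
  set v : Fin n → ℝ := fun i => u i
  have hf_shift : ∀ x : Fin n → ℝ,
      (f fun i => Real.exp (v i) * Real.exp (x i)) = Real.exp d * f fun i => Real.exp (x i) := by
    intro x
    refine sum_mul_prod_mul_zpow a (fun m hm => ?_) _
    rw [Real.prod_exp_zpow, ← hdeg m hm]
    push_cast
    rfl
  set h : (Fin n → ℝ) → ℝ := fun x =>
    (∏ i, Real.exp (x i) ^ (s i).re) * (f fun i => Real.exp (x i)) ^ (-c.re)
  have hh_shift : ∀ x, h (x + v)
      = ((∏ i, Real.exp (v i) ^ (s i).re) * Real.exp d ^ (-c.re)) * h x := by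
    intro x
    simp only [h, Pi.add_apply, add_comm (x _), Real.exp_add]
    rw [hf_shift, Real.mul_rpow (Real.exp_pos _).le (hf_pos x).le]
    simp only [Real.mul_rpow (Real.exp_pos _).le (Real.exp_pos _).le, prod_mul_distrib]
    ring
  have hv : v ≠ 0 := fun hv => hu (funext fun i => by simpa [v] using congrFun hv i)
  have hh_pos : ∀ x, 0 < h x := fun x =>
    mul_pos (prod_pos fun i _ => Real.rpow_pos_of_pos (Real.exp_pos _) _)
      (Real.rpow_pos_of_pos (hf_pos x) _)
  refine not_integrable_of_forall_add_eq_mul (μ := volume) hh_pos hv hh_shift ?_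
  refine ((integrableOn_pos_orthant_iff_integrable_comp_exp _).1 hint).norm.congr
    (ae_of_all _ fun x => ?_)
  exact norm_prod_smul_mellin_integrand (fun i => Real.exp_pos _) (hf_pos x) s c
end
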